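/- The Klein four-group C₂ × C₂ is the only non-trivial finite group G such that every automorphism of the enhanced power graph of G is a group automorphism of G (i.e., Aut(G) = Aut(G_e(G)) as permutation groups on G). -/

import Mathlib

open SimpleGraph

/-- The enhanced power graph of a group. -/
def enhancedPowerGraph (G : Type*) [Group G] : SimpleGraph G where
  Adj x y := x ≠ y ∧ ∃ z : G, x ∈ Subgroup.zpowers z ∧ y ∈ Subgroup.zpowers z
  symm := ⟨by rintro x y ⟨h, z, hx, hy⟩; exact ⟨h.symm, z, hy, hx⟩⟩
  loopless := ⟨by rintro x ⟨h, -⟩; exact h rfl⟩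

/-- The (undirected) power graph of a group. -/
def powerGraph (G : Type*) [Group G] : SimpleGraph G where
  Adj x y := x ≠ y ∧ (x ∈ Subgroup.zpowers y ∨ y ∈ Subgroup.zpowers x)
  symm := ⟨by rintro x y ⟨h, hz⟩; exact ⟨h.symm, hz.symm⟩⟩
  loopless := ⟨by rintro x ⟨h, -⟩; exact h rfl⟩

/-- The strong product of two simple graphs. -/
def strongProd {α β : Type*} (Γ : SimpleGraph α) (Δ : SimpleGraph β) :
    SimpleGraph (α × β) where
  Adj p q := (p.1 = q.1 ∧ Δ.Adj p.2 q.2) ∨ (Γ.Adj p.1 q.1 ∧ p.2 = q.2) ∨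
    (Γ.Adj p.1 q.1 ∧ Δ.Adj p.2 q.2)
  symm := by
    constructor
    rintro ⟨a, b⟩ ⟨c, d⟩ (⟨h1, h2⟩ | ⟨h1, h2⟩ | ⟨h1, h2⟩)
    · exact Or.inl ⟨h1.symm, h2.symm⟩
    · exact Or.inr (Or.inl ⟨h1.symm, h2.symm⟩)
    · exact Or.inr (Or.inr ⟨h1.symm, h2.symm⟩)
  loopless := by
    constructor
    rintro ⟨a, b⟩ (⟨-, h⟩ | ⟨h, -⟩ | ⟨h, -⟩) <;> exact h.ne rfl

/-- The automorphism group of a simple graph, as a subgroup of permutations. -/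
def graphAut {V : Type*} (Γ : SimpleGraph V) : Subgroup (Equiv.Perm V) where
  carrier := {σ | ∀ x y, Γ.Adj (σ x) (σ y) ↔ Γ.Adj x y}
  one_mem' := fun _ _ => Iff.rfl
  mul_mem' := by
    intro σ τ hσ hτ x y
    simpa [Equiv.Perm.mul_apply] using (hσ (τ x) (τ y)).trans (hτ x y)
  inv_mem' := by
    intro σ hσ x y
    simpa using (hσ (σ⁻¹ x) (σ⁻¹ y)).symm

/-- A subgroup is maximal cyclic if it is maximal among cyclic subgroups. -/
def IsMaxCyclic {G : Type*} [Group G] (C : Subgroup G) : Prop :=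
  Maximal (fun K : Subgroup G => ∃ g : G, K = Subgroup.zpowers g) C

/-- The closed neighborhood of a vertex. -/
def closedNbhd {V : Type*} (Γ : SimpleGraph V) (x : V) : Set V :=
  Γ.neighborSet x ∪ {x}

/-!
If a group automorphism `f` acts on `G` as the transposition `(a b)`, then every `g ∉ {a, b}` is
fixed, and so is `a * g` unless `a * g ∈ {a, b}`; since `f (a * g) = b * g ≠ a * g`, this forces
`G = {1, a, b, a⁻¹ * b}`. The transposition `(x x⁻¹)` always preserves the enhanced power graph,
so if all graph automorphisms are group automorphisms then `G` is cyclic unless `x = x⁻¹` for all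
`x`; and `G` is not cyclic, because then the graph is complete and `(1 x)` is a graph automorphism.
Hence the graph is the star centred at `1`, every transposition of two nonidentity elements is a
graph automorphism, and `|G| ≤ 4` together with non-cyclicity gives the Klein four-group.
Conversely, in the Klein four-group a graph automorphism fixes `1`, the centre of the star, and
every bijection fixing `1` is a group automorphism.
-/

section GraphAut

variable {V : Type*}

lemma graphAut_top : graphAut (⊤ : SimpleGraph V) = ⊤ :=
  eq_top_iff.mpr fun σ _ x y => by simp [σ.injective.ne_iff]

lemma forall_adj_apply_of_mem_graphAut {Γ : SimpleGraph V} {σ : Equiv.Perm V}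
    (hσ : σ ∈ graphAut Γ) {v : V} (hv : ∀ w ≠ v, Γ.Adj v w) : ∀ w ≠ σ v, Γ.Adj (σ v) w := by
  intro w hw
  rw [← σ.apply_symm_apply w, hσ]
  exact hv _ fun h => hw (by rw [← h, σ.apply_symm_apply])

end GraphAut

section EnhancedPowerGraph

variable {G : Type*} [Group G]

lemma enhancedPowerGraph_adj_map {H : Type*} [Group H] {f : G →* H}
    (hf : Function.Injective f) {x y : G} (h : (enhancedPowerGraph G).Adj x y) :
    (enhancedPowerGraph H).Adj (f x) (f y) := by
  obtain ⟨hxy, z, hx, hy⟩ := h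
  refine ⟨hf.ne hxy, f z, ?_, ?_⟩ <;> rw [← MonoidHom.map_zpowers]
  exacts [Subgroup.mem_map_of_mem f hx, Subgroup.mem_map_of_mem f hy]

lemma mulEquiv_mem_graphAut (f : G ≃* G) :
    f.toEquiv ∈ graphAut (enhancedPowerGraph G) := fun x y =>
  ⟨fun h => by
    simpa using enhancedPowerGraph_adj_map (f := f.symm.toMonoidHom) f.symm.injective h,
  enhancedPowerGraph_adj_map (f := f.toMonoidHom) f.injective⟩

lemma enhancedPowerGraph_eq_top [IsCyclic G] : enhancedPowerGraph G = ⊤ := by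
  obtain ⟨z, hz⟩ := IsCyclic.exists_generator (α := G)
  ext x y
  exact ⟨fun h => h.1, fun h => ⟨h, z, hz x, hz y⟩⟩

lemma swap_inv_mem_graphAut [DecidableEq G] (x : G) :
    Equiv.swap x x⁻¹ ∈ graphAut (enhancedPowerGraph G) := by
  have hmem : ∀ u z : G, Equiv.swap x x⁻¹ u ∈ Subgroup.zpowers z ↔ u ∈ Subgroup.zpowers z := by
    intro u z
    rcases eq_or_ne u x with rfl | hx
    · simp
    rcases eq_or_ne u x⁻¹ with rfl | hx'
    · simp
    · rw [Equiv.swap_apply_of_ne_of_ne hx hx']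
  intro u v
  simp only [enhancedPowerGraph, hmem, (Equiv.swap x x⁻¹).injective.ne_iff]

lemma eq_one_or_eq_of_mem_zpowers {z x : G} (hz : z⁻¹ = z) (hx : x ∈ Subgroup.zpowers z) :
    x = 1 ∨ x = z := by
  obtain ⟨n, rfl⟩ := Subgroup.mem_zpowers_iff.mp hx
  have hz2 : z ^ 2 = 1 := by rw [sq, ← mul_inv_cancel z, hz]
  rw [zpow_eq_zpow_emod' n hz2]
  rcases Int.emod_two_eq_zero_or_one n with h | h <;> simp [h]

lemma enhancedPowerGraph_adj_iff_of_forall_inv_eq_self (h : ∀ x : G, x⁻¹ = x) {x y : G} :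
    (enhancedPowerGraph G).Adj x y ↔ x ≠ y ∧ (x = 1 ∨ y = 1) := by
  constructor
  · rintro ⟨hxy, z, hx, hy⟩
    refine ⟨hxy, ?_⟩
    rcases eq_one_or_eq_of_mem_zpowers (h z) hx with hx | rfl
    · exact .inl hx
    · exact .inr ((eq_one_or_eq_of_mem_zpowers (h x) hy).resolve_right hxy.symm)
  · rintro ⟨hxy, rfl | rfl⟩
    · exact ⟨hxy, y, Subgroup.one_mem _, Subgroup.mem_zpowers y⟩
    · exact ⟨hxy, x, Subgroup.mem_zpowers x, Subgroup.one_mem _⟩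

lemma mem_graphAut_of_map_one (h : ∀ x : G, x⁻¹ = x) {σ : Equiv.Perm G} (hσ : σ 1 = 1) :
    σ ∈ graphAut (enhancedPowerGraph G) := by
  intro x y
  have hone : ∀ w, σ w = 1 ↔ w = 1 := fun _ => σ.injective.eq_iff' hσ
  simp only [enhancedPowerGraph_adj_iff_of_forall_inv_eq_self h, σ.injective.ne_iff, hone]

lemma map_one_of_mem_graphAut (h : ∀ x : G, x⁻¹ = x) (hG : 3 ≤ ENat.card G)
    {σ : Equiv.Perm G} (hσ : σ ∈ graphAut (enhancedPowerGraph G)) : σ 1 = 1 := by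
  have hone : ∀ w ≠ (1 : G), (enhancedPowerGraph G).Adj 1 w := fun w hw =>
    (enhancedPowerGraph_adj_iff_of_forall_inv_eq_self h).mpr ⟨hw.symm, .inl rfl⟩
  obtain ⟨w, hw1, hwσ⟩ := ENat.exists_ne_ne_of_three_le hG 1 (σ 1)
  have := (enhancedPowerGraph_adj_iff_of_forall_inv_eq_self h).mp
    (forall_adj_apply_of_mem_graphAut hσ hone w hwσ)
  exact this.2.resolve_right hw1

lemma eq_one_or_eq_or_eq_or_eq_of_swap [DecidableEq G] (f : G →* G) {a b : G} (hab : a ≠ b)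
    (hf : ∀ g, f g = Equiv.swap a b g) (g : G) : g = 1 ∨ g = a ∨ g = b ∨ g = a⁻¹ * b := by
  by_contra! hg
  obtain ⟨hg1, hga, hgb, hgab⟩ := hg
  have hfa : f a = b := by rw [hf, Equiv.swap_apply_left]
  have hfg : f g = g := by rw [hf, Equiv.swap_apply_of_ne_of_ne hga hgb]
  have hag : a * g ≠ a := fun h => hg1 (by simpa using h)
  have hagb : a * g ≠ b := fun h => hgab (by rw [← h, inv_mul_cancel_left])
  have := map_mul f a g
  rw [hf (a * g), Equiv.swap_apply_of_ne_of_ne hag hagb, hfa, hfg] at this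
  exact hab (mul_right_cancel this)

end EnhancedPowerGraph

section Characterization

variable {G : Type*} [Group G]

lemma not_isCyclic_of_graphAut_subset [Nontrivial G]
    (hG : (graphAut (enhancedPowerGraph G) : Set (Equiv.Perm G)) ⊆
      {σ | ∃ f : G ≃* G, ∀ g, σ g = f g}) : ¬IsCyclic G := by
  classical
  intro _
  obtain ⟨x, hx⟩ := exists_ne (1 : G)
  obtain ⟨f, hf⟩ := hG (show Equiv.swap 1 x ∈ graphAut (enhancedPowerGraph G) by
    rw [enhancedPowerGraph_eq_top, graphAut_top]; trivial)
  exact hx (by simpa using hf 1)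

lemma inv_eq_self_of_graphAut_subset [Nontrivial G]
    (hG : (graphAut (enhancedPowerGraph G) : Set (Equiv.Perm G)) ⊆
      {σ | ∃ f : G ≃* G, ∀ g, σ g = f g}) (x : G) : x⁻¹ = x := by
  classical
  by_contra hx
  obtain ⟨f, hf⟩ := hG (swap_inv_mem_graphAut x)
  refine not_isCyclic_of_graphAut_subset hG
    ⟨⟨x, fun g => show g ∈ Subgroup.zpowers x from ?_⟩⟩
  rcases eq_one_or_eq_or_eq_or_eq_of_swap f.toMonoidHom (Ne.symm hx) (fun g => (hf g).symm) g
    with rfl | rfl | rfl | rfl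
  · exact Subgroup.one_mem _
  · exact Subgroup.mem_zpowers _
  · exact Subgroup.inv_mem _ (Subgroup.mem_zpowers _)
  · exact Subgroup.mul_mem _ (Subgroup.inv_mem _ (Subgroup.mem_zpowers _))
      (Subgroup.inv_mem _ (Subgroup.mem_zpowers _))

lemma card_le_four_of_graphAut_subset [Fintype G] [Nontrivial G]
    (hG : (graphAut (enhancedPowerGraph G) : Set (Equiv.Perm G)) ⊆
      {σ | ∃ f : G ≃* G, ∀ g, σ g = f g}) : Fintype.card G ≤ 4 := by
  classical
  obtain ⟨a, ha⟩ := exists_ne (1 : G)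
  obtain ⟨b, hb⟩ : ∃ b, b ∉ Subgroup.zpowers a := by
    by_contra! h
    exact not_isCyclic_of_graphAut_subset hG ⟨a, h⟩
  have hb1 : b ≠ 1 := fun h => hb (h ▸ Subgroup.one_mem _)
  have hab : a ≠ b := fun h => hb (h ▸ Subgroup.mem_zpowers a)
  obtain ⟨f, hf⟩ := hG (mem_graphAut_of_map_one (inv_eq_self_of_graphAut_subset hG)
    (Equiv.swap_apply_of_ne_of_ne ha.symm hb1.symm))
  calc Fintype.card G = (Finset.univ : Finset G).card := Finset.card_univ.symm
    _ ≤ ({1, a, b, a⁻¹ * b} : Finset G).card := Finset.card_le_card fun g _ => by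
      simpa using eq_one_or_eq_or_eq_or_eq_of_swap f.toMonoidHom hab (fun g => (hf g).symm) g
    _ ≤ 4 := Finset.card_le_four

lemma isKleinFour_of_graphAut_subset [Fintype G] [Nontrivial G]
    (hG : (graphAut (enhancedPowerGraph G) : Set (Equiv.Perm G)) ⊆
      {σ | ∃ f : G ≃* G, ∀ g, σ g = f g}) : IsKleinFour G where
  card_four := by
    have hcyc := not_isCyclic_of_graphAut_subset hG
    have h4 := card_le_four_of_graphAut_subset hG
    have h1 := Fintype.one_lt_card (α := G)
    rw [Nat.card_eq_fintype_card]
    interval_cases h : Fintype.card G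
    · exact absurd (isCyclic_of_prime_card (p := 2) (Nat.card_eq_fintype_card.trans h)) hcyc
    · exact absurd (isCyclic_of_prime_card (p := 3) (Nat.card_eq_fintype_card.trans h)) hcyc
    · rfl
  exponent_two := (Monoid.exponent_eq_prime_iff Nat.prime_two).mpr fun g hg =>
    orderOf_eq_prime (by rw [sq, ← mul_inv_cancel g, inv_eq_self_of_graphAut_subset hG]) hg

lemma IsKleinFour.of_mulEquiv {H : Type*} [Group H] [IsKleinFour H] (e : G ≃* H) :
    IsKleinFour G where
  card_four := (Nat.card_congr e.toEquiv).trans IsKleinFour.card_four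
  exponent_two := (Monoid.exponent_eq_of_mulEquiv e).trans IsKleinFour.exponent_two

lemma graphAut_subset_of_isKleinFour [Finite G] [IsKleinFour G] :
    (graphAut (enhancedPowerGraph G) : Set (Equiv.Perm G)) ⊆
      {σ | ∃ f : G ≃* G, ∀ g, σ g = f g} := fun σ hσ =>
  ⟨IsKleinFour.mulEquiv σ (map_one_of_mem_graphAut IsKleinFour.inv_eq_self
    (by simp [ENat.card_eq_coe_natCard]; norm_num) hσ), fun _ => rfl⟩

end Characterization

theorem stmt_13 {G : Type*} [Group G] [Fintype G] [Nontrivial G] :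
    ({σ : Equiv.Perm G | ∃ f : G ≃* G, ∀ g : G, σ g = f g} =
      (graphAut (enhancedPowerGraph G) : Set (Equiv.Perm G))) ↔
    Nonempty (G ≃* Multiplicative (ZMod 2 × ZMod 2)) := by
  constructor
  · intro h
    have := isKleinFour_of_graphAut_subset h.ge
    exact IsKleinFour.nonempty_mulEquiv
  · rintro ⟨e⟩
    have := IsKleinFour.of_mulEquiv e
    refine Set.Subset.antisymm ?_ graphAut_subset_of_isKleinFour
    rintro σ ⟨f, hf⟩
    exact (Equiv.ext hf : σ = f.toEquiv) ▸ mulEquiv_mem_graphAut f
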